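/- The elements n_i (i ∈ I) of GL(M) satisfy the braid relations: for i ≠ j in I, letting m ≥ 2 be the order of s_i s_j in W, one has n_i n_j n_i ··· = n_j n_i n_j ··· with m factors on each side. -/

import Mathlib

/-!
Each `nᵢ` permutes the basis `z` up to sign exactly as `sᵢ` permutes `Ψ`, the sign being `-1`
precisely when `(μ, αᵢ^∨) = 1`. The Cartan integers `a = (αⱼ, αᵢ^∨)`, `b = (αᵢ, αⱼ^∨)` are
nonpositive integers with `ab < 4` (strict Cauchy–Schwarz), so `(a, b)` is one of six pairs. On
`span {αᵢ, αⱼ}` the product `sᵢsⱼ` acts by an explicit integer `2 × 2` matrix, and it fixes a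
complement of that span, so the order `m` of `sᵢsⱼ` is the order of this matrix: `2, 3, 4` or `6`.
For each pair the braid relation of length `m` is then checked on basis vectors; the pairings of
`μ` and of the intermediate weights with `αᵢ, αⱼ` lie in `{0, ±1}`, which leaves only finitely
many sign patterns.
-/

noncomputable section

open scoped BigOperators

/-- `pr B x y` is the pairing `(x, y^∨) = 2(x,y)/(y,y)`. -/
def pr {E : Type} [AddCommGroup E] [Module ℚ E] (B : E →ₗ[ℚ] E →ₗ[ℚ] ℚ) (x y : E) : ℚ :=
  2 * B x y / B y y

/-- A reduced irreducible crystallographic root system `Φ` in a finite-dimensional ℚ-vector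
space `E` equipped with a positive definite symmetric bilinear form, together with a system of
simple roots `α i` (`i ∈ I`). -/
structure RootSystemCtx (E I : Type) [AddCommGroup E] [Module ℚ E] [Fintype I] : Type where
  B : E →ₗ[ℚ] E →ₗ[ℚ] ℚ
  Bsymm : ∀ x y, B x y = B y x
  Bpos : ∀ x, x ≠ 0 → 0 < B x x
  findim : FiniteDimensional ℚ E
  Φ : Set E
  Φfin : Φ.Finite
  zero_nmem : (0 : E) ∉ Φ
  reduced : ∀ a ∈ Φ, ∀ b ∈ Φ, b ≠ a → b ≠ -a → LinearIndependent ℚ ![a, b]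
  crystal : ∀ a ∈ Φ, ∀ b ∈ Φ, ∃ n : ℤ, pr B b a = (n : ℚ)
  reflect_mem : ∀ a ∈ Φ, ∀ b ∈ Φ, b - pr B b a • a ∈ Φ
  α : I → E
  α_mem : ∀ i, α i ∈ Φ
  α_indep : LinearIndependent ℚ α
  α_span : Submodule.span ℚ (Set.range α) = ⊤
  pos_neg : ∀ b ∈ Φ, (∃ cf : I → ℤ, (∀ i, 0 ≤ cf i) ∧ b = ∑ i, (cf i : ℚ) • α i) ∨
      (∃ cf : I → ℤ, (∀ i, cf i ≤ 0) ∧ b = ∑ i, (cf i : ℚ) • α i)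
  irred : ¬ ∃ Φ₁ Φ₂ : Set E, Φ₁.Nonempty ∧ Φ₂.Nonempty ∧ Φ₁ ∪ Φ₂ = Φ ∧
      ∀ a ∈ Φ₁, ∀ b ∈ Φ₂, B a b = 0

namespace RootSystemCtx

variable {E I : Type} [AddCommGroup E] [Module ℚ E] [Fintype I] (c : RootSystemCtx E I)

/-- The linear functional `(·, a^∨)`. -/
def coform (a : E) : Module.Dual ℚ E := (2 * (c.B a a)⁻¹) • (c.B.flip a)

lemma coform_apply (a x : E) : c.coform a x = pr c.B x a := by
  simp only [coform, LinearMap.smul_apply, LinearMap.flip_apply, smul_eq_mul, pr,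
    div_eq_mul_inv]
  ring

lemma coform_self {a : E} (ha : a ∈ c.Φ) : c.coform a a = 2 := by
  have h0 : a ≠ 0 := fun h => c.zero_nmem (h ▸ ha)
  have hB : c.B a a ≠ 0 := ne_of_gt (c.Bpos a h0)
  rw [coform_apply, pr]
  field_simp

/-- The simple reflection `s i : v ↦ v - (v, αᵢ^∨) αᵢ`. -/
def s (i : I) : E ≃ₗ[ℚ] E := Module.reflection (c.coform_self (c.α_mem i))

lemma s_apply (i : I) (v : E) : c.s i v = v - pr c.B v (c.α i) • c.α i := by
  rw [s, Module.reflection_apply, coform_apply]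

/-- The Weyl group, as a subgroup of the group of linear automorphisms of `E`. -/
def Weyl : Subgroup (E ≃ₗ[ℚ] E) := Subgroup.closure (Set.range c.s)

/-- `lam` is a minuscule (dominant) weight: a nonzero dominant weight (integral pairing
with every simple coroot) with `(lam, a^∨) ∈ {0, ±1}` for every root `a`. -/
def IsMinuscule (lam : E) : Prop :=
  lam ≠ 0 ∧ (∀ i, ∃ n : ℤ, pr c.B lam (c.α i) = (n : ℚ)) ∧ (∀ i, 0 ≤ pr c.B lam (c.α i)) ∧
    ∀ a ∈ c.Φ, pr c.B lam a = 0 ∨ pr c.B lam a = 1 ∨ pr c.B lam a = -1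

/-- `b` is a positive root. -/
def IsPos (b : E) : Prop :=
  b ∈ c.Φ ∧ ∃ cf : I → ℚ, (∀ i, 0 ≤ cf i) ∧ b = ∑ i, cf i • c.α i

end RootSystemCtx

/-- A nonempty union `Ψ` of Weyl group orbits of minuscule weights. -/
structure PsiData {E I : Type} [AddCommGroup E] [Module ℚ E] [Fintype I]
    (c : RootSystemCtx E I) : Type where
  Ψ : Set E
  nonempty : Ψ.Nonempty
  finite : Ψ.Finite
  orbit : ∀ μ ∈ Ψ, ∃ lam, c.IsMinuscule lam ∧ ∃ w ∈ c.Weyl, w lam = μ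
  stab : ∀ μ ∈ Ψ, ∀ w ∈ c.Weyl, w μ ∈ Ψ

/-- `nOp e f i t tinv` is the operator `(1 + t eᵢ)(1 - t⁻¹ fᵢ)(1 + t eᵢ)`, where `tinv`
is the inverse of `t`. -/
def nOp {I K M' : Type} [CommRing K] [AddCommGroup M'] [Module K M']
    (e f : I → Module.End K M') (i : I) (t tinv : K) : Module.End K M' :=
  (1 + t • e i) * (1 - tinv • f i) * (1 + t • e i)

/-- `hOp e f i t` is the operator `hᵢ(t) = nᵢ(t) nᵢ(-1)` for a unit `t`. -/
def hOp {I K M' : Type} [CommRing K] [AddCommGroup M'] [Module K M']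
    (e f : I → Module.End K M') (i : I) (t : Kˣ) : Module.End K M' :=
  nOp e f i (t : K) ((t⁻¹ : Kˣ) : K) * nOp e f i ((-1 : Kˣ) : K) (((-1 : Kˣ)⁻¹ : Kˣ) : K)

/-- Conjugation `n_{i₁} ⋯ n_{i_k} x n_{i_k}⁻¹ ⋯ n_{i₁}⁻¹` for a list `l = [i₁, …, i_k]`. -/
def conjOp {I M' : Type} [AddCommGroup M'] [Module ℂ M'] (nu : I → (Module.End ℂ M')ˣ)
    (x : Module.End ℂ M') (l : List I) : Module.End ℂ M' :=
  ↑((l.map nu).prod) * x * ↑(((l.map nu).prod)⁻¹)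

attribute [local instance] LieRing.ofAssociativeRing

/-- The Lie subalgebra of `𝔤𝔩(M)` generated by the `eᵢ` and `fᵢ`. -/
def genLie {I M' : Type} [AddCommGroup M'] [Module ℂ M'] (e f : I → Module.End ℂ M') :
    LieSubalgebra ℂ (Module.End ℂ M') :=
  LieSubalgebra.lieSpan ℂ (Module.End ℂ M') (Set.range e ∪ Set.range f)

/-- The root space `𝔤_a = {x ∈ 𝔤 ∣ [hⱼ, x] = (a, αⱼ^∨) x for all j}`, as a set. -/
def rootSet {E I M' : Type} [AddCommGroup E] [Module ℚ E] [Fintype I]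
    [AddCommGroup M'] [Module ℂ M'] (c : RootSystemCtx E I)
    (e f h : I → Module.End ℂ M') (a : E) : Set (Module.End ℂ M') :=
  {x | x ∈ genLie e f ∧ ∀ j, ⁅h j, x⁆ = ((pr c.B a (c.α j) : ℚ) : ℂ) • x}

/-- The root space `𝔤_a`, as a submodule of `𝔤𝔩(M)`. -/
def rootSp {E I M' : Type} [AddCommGroup E] [Module ℚ E] [Fintype I]
    [AddCommGroup M'] [Module ℂ M'] (c : RootSystemCtx E I)
    (e f h : I → Module.End ℂ M') (a : E) : Submodule ℂ (Module.End ℂ M') :=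
  (genLie e f).toSubmodule ⊓ ⨅ j : I,
    Module.End.eigenspace
      (LinearMap.mulLeft ℂ (h j) - LinearMap.mulRight ℂ (h j) : Module.End ℂ (Module.End ℂ M'))
      ((pr c.B a (c.α j) : ℚ) : ℂ)

/-- The diagonal subgroup `H` generated by all `hᵢ(t)`, `t ∈ Kˣ`. -/
def Hgroup {I K M' : Type} [CommRing K] [AddCommGroup M'] [Module K M']
    (e f : I → Module.End K M') : Subgroup (Module.End K M')ˣ :=
  Subgroup.closure {g | ∃ (i : I) (t : Kˣ), (g : Module.End K M') = hOp e f i t}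

/-- The monomial subgroup `N` generated by all `nᵢ(t)`, `t ∈ Kˣ`. -/
def Ngroup {I K M' : Type} [CommRing K] [AddCommGroup M'] [Module K M']
    (e f : I → Module.End K M') : Subgroup (Module.End K M')ˣ :=
  Subgroup.closure {g | ∃ (i : I) (t : Kˣ),
    (g : Module.End K M') = nOp e f i (t : K) ((t⁻¹ : Kˣ) : K)}

/-- The subgroup `U⁺` generated by all `x_γ(t) = 1 + t ē_γ` with `γ ∈ Φ⁺`. -/
def Uplus {E I K M' : Type} [AddCommGroup E] [Module ℚ E] [Fintype I]
    [CommRing K] [AddCommGroup M'] [Module K M'] (c : RootSystemCtx E I)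
    (eb : E → Module.End K M') : Subgroup (Module.End K M')ˣ :=
  Subgroup.closure {g | ∃ γ, c.IsPos γ ∧ ∃ t : K, (g : Module.End K M') = 1 + t • eb γ}

/-- The subgroup `U⁻` generated by all `x_γ(t) = 1 + t ē_γ` with `γ ∈ Φ⁻`. -/
def Uminus {E I K M' : Type} [AddCommGroup E] [Module ℚ E] [Fintype I]
    [CommRing K] [AddCommGroup M'] [Module K M'] (c : RootSystemCtx E I)
    (eb : E → Module.End K M') : Subgroup (Module.End K M')ˣ :=
  Subgroup.closure {g | ∃ γ, c.IsPos (-γ) ∧ ∃ t : K, (g : Module.End K M') = 1 + t • eb γ}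

/-- The subgroup `Uᵢ⁺` generated by all `x_γ(t)` with `γ ∈ Φ⁺`, `γ ≠ αᵢ`. -/
def UplusI {E I K M' : Type} [AddCommGroup E] [Module ℚ E] [Fintype I]
    [CommRing K] [AddCommGroup M'] [Module K M'] (c : RootSystemCtx E I)
    (eb : E → Module.End K M') (i : I) : Subgroup (Module.End K M')ˣ :=
  Subgroup.closure {g | ∃ γ, c.IsPos γ ∧ γ ≠ c.α i ∧ ∃ t : K, (g : Module.End K M') = 1 + t • eb γ}

section Pairing

variable {E : Type} [AddCommGroup E] [Module ℚ E] (B : E →ₗ[ℚ] E →ₗ[ℚ] ℚ)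

lemma pr_add (x y z : E) : pr B (x + y) z = pr B x z + pr B y z := by
  simp only [pr, map_add, LinearMap.add_apply, mul_add, add_div]

lemma pr_sub (x y z : E) : pr B (x - y) z = pr B x z - pr B y z := by
  simp only [pr, map_sub, LinearMap.sub_apply, mul_sub, sub_div]

lemma pr_smul (t : ℚ) (x z : E) : pr B (t • x) z = t * pr B x z := by
  simp only [pr, map_smul, LinearMap.smul_apply, smul_eq_mul]
  ring

end Pairing

namespace RootSystemCtx

variable {E I : Type} [AddCommGroup E] [Module ℚ E] [Fintype I] (c : RootSystemCtx E I)

lemma α_ne_zero (i : I) : c.α i ≠ 0 := fun h => c.zero_nmem (h ▸ c.α_mem i)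

lemma B_α_α_pos (i : I) : 0 < c.B (c.α i) (c.α i) := c.Bpos _ (c.α_ne_zero i)

lemma pr_α_self (i : I) : pr c.B (c.α i) (c.α i) = 2 :=
  (c.coform_apply _ _).symm.trans (c.coform_self (c.α_mem i))

lemma B_s_s (k : I) (x y : E) : c.B (c.s k x) (c.s k y) = c.B x y := by
  have h : c.B (c.α k) (c.α k) ≠ 0 := (c.B_α_α_pos k).ne'
  simp only [c.s_apply, pr, map_sub, map_smul, LinearMap.sub_apply, LinearMap.smul_apply,
    smul_eq_mul, c.Bsymm y (c.α k)]
  field_simp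
  ring

lemma s_s (k : I) (x : E) : c.s k (c.s k x) = x :=
  Module.involutive_reflection _ x

lemma s_mem_Φ_iff (k : I) {b : E} : c.s k b ∈ c.Φ ↔ b ∈ c.Φ := by
  have hmem : ∀ {b}, b ∈ c.Φ → c.s k b ∈ c.Φ := fun hb => by
    rw [c.s_apply]
    exact c.reflect_mem _ (c.α_mem k) _ hb
  exact ⟨fun hb => c.s_s k b ▸ hmem hb, hmem⟩

def isometryGroup : Subgroup (E ≃ₗ[ℚ] E) where
  carrier := {w | (∀ x y, c.B (w x) (w y) = c.B x y) ∧ ∀ a, w a ∈ c.Φ ↔ a ∈ c.Φ}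
  mul_mem' {u v} hu hv :=
    ⟨fun x y => (hu.1 _ _).trans (hv.1 x y), fun a => (hu.2 _).trans (hv.2 a)⟩
  one_mem' := ⟨fun _ _ => rfl, fun _ => Iff.rfl⟩
  inv_mem' {w} hw := by
    have hww : ∀ x, w (w⁻¹ x) = x := fun x => w.apply_symm_apply x
    exact ⟨fun x y => by rw [← hw.1, hww, hww], fun a => by rw [← hw.2, hww]⟩

lemma Weyl_le_isometryGroup : c.Weyl ≤ c.isometryGroup :=
  (Subgroup.closure_le _).2 <| by
    rintro _ ⟨k, rfl⟩
    exact ⟨c.B_s_s k, fun _ => c.s_mem_Φ_iff k⟩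

lemma pr_apply_apply {w : E ≃ₗ[ℚ] E} (hw : w ∈ c.isometryGroup) (x y : E) :
    pr c.B (w x) (w y) = pr c.B x y := by
  simp only [pr, hw.1]

end RootSystemCtx

namespace PsiData

variable {E I : Type} [AddCommGroup E] [Module ℚ E] [Fintype I] {c : RootSystemCtx E I}
  (P : PsiData c)

lemma pr_mem_of_mem_Φ {μ : E} (hμ : μ ∈ P.Ψ) {a : E} (ha : a ∈ c.Φ) :
    pr c.B μ a = 0 ∨ pr c.B μ a = 1 ∨ pr c.B μ a = -1 := by
  obtain ⟨lam, hlam, w, hw, rfl⟩ := P.orbit μ hμ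
  have hw' : w⁻¹ ∈ c.isometryGroup := inv_mem (c.Weyl_le_isometryGroup hw)
  have hwa : w⁻¹ a ∈ c.Φ := (hw'.2 a).2 ha
  rw [← c.pr_apply_apply hw', show w⁻¹ (w lam) = lam from w.symm_apply_apply lam]
  exact hlam.2.2.2 _ hwa

lemma sub_pr_smul_mem {μ : E} (hμ : μ ∈ P.Ψ) (k : I) :
    μ - pr c.B μ (c.α k) • c.α k ∈ P.Ψ :=
  c.s_apply k μ ▸ P.stab μ hμ _ (Subgroup.subset_closure ⟨k, rfl⟩)

end PsiData

namespace RootSystemCtx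

variable {E I : Type} [AddCommGroup E] [Module ℚ E] [Fintype I] (c : RootSystemCtx E I)

def simpleBasis : Module.Basis I ℚ E := Module.Basis.mk c.α_indep c.α_span.ge

lemma simpleBasis_apply (k : I) : c.simpleBasis k = c.α k := Module.Basis.mk_apply _ _ _

lemma simpleBasis_repr_nonneg_or_nonpos {b : E} (hb : b ∈ c.Φ) :
    (∀ k, 0 ≤ c.simpleBasis.repr b k) ∨ ∀ k, c.simpleBasis.repr b k ≤ 0 := by
  have hrepr : ∀ cf : I → ℤ, b = ∑ k, (cf k : ℚ) • c.α k →
      ∀ k, c.simpleBasis.repr b k = cf k := by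
    rintro cf rfl k
    simp_rw [← c.simpleBasis_apply, Module.Basis.repr_sum_self]
  rcases c.pos_neg b hb with ⟨cf, hcf, hsum⟩ | ⟨cf, hcf, hsum⟩
  · exact Or.inl fun k => hrepr cf hsum k ▸ by exact_mod_cast hcf k
  · exact Or.inr fun k => hrepr cf hsum k ▸ by exact_mod_cast hcf k

variable {i j : I}

lemma pr_α_α_nonpos (hij : i ≠ j) : pr c.B (c.α j) (c.α i) ≤ 0 := by
  have hβ : c.α j - pr c.B (c.α j) (c.α i) • c.α i ∈ c.Φ :=
    c.reflect_mem _ (c.α_mem i) _ (c.α_mem j)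
  have hα : ∀ k, c.simpleBasis.repr (c.α k) = Finsupp.single k 1 := fun k => by
    rw [← c.simpleBasis_apply, Module.Basis.repr_self]
  rcases c.simpleBasis_repr_nonneg_or_nonpos hβ with h | h
  · simpa [hα, hij] using h i
  · exact absurd (h j) (by simp [hα, hij.symm])

lemma eq_zero_of_smul_α_add_smul_α_eq_zero (hij : i ≠ j) {s t : ℚ}
    (h : s • c.α i + t • c.α j = 0) : s = 0 ∧ t = 0 :=
  (LinearIndepOn.pair_iff c.α hij).1 (c.α_indep.linearIndepOn _) s t h

lemma pr_α_α_eq_zero_iff : pr c.B (c.α j) (c.α i) = 0 ↔ pr c.B (c.α i) (c.α j) = 0 := by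
  simp [pr, c.Bsymm (c.α j), (c.B_α_α_pos i).ne', (c.B_α_α_pos j).ne']

/-- Strict Cauchy–Schwarz for the linearly independent pair `αᵢ, αⱼ`. -/
lemma pr_α_α_mul_pr_α_α_lt_four (hij : i ≠ j) :
    pr c.B (c.α j) (c.α i) * pr c.B (c.α i) (c.α j) < 4 := by
  have hii := c.B_α_α_pos i
  have hjj := c.B_α_α_pos j
  set v := c.B (c.α j) (c.α j) • c.α i + (-c.B (c.α i) (c.α j)) • c.α j
  have hv : v ≠ 0 := by
    intro hv
    exact hjj.ne' (c.eq_zero_of_smul_α_add_smul_α_eq_zero hij hv).1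
  have hBv : c.B v v = c.B (c.α j) (c.α j) *
      (c.B (c.α i) (c.α i) * c.B (c.α j) (c.α j) - c.B (c.α i) (c.α j) ^ 2) := by
    simp only [v, map_add, map_smul, LinearMap.add_apply, LinearMap.smul_apply, smul_eq_mul,
      c.Bsymm (c.α j) (c.α i)]
    ring
  have hCS : c.B (c.α i) (c.α j) ^ 2 < c.B (c.α i) (c.α i) * c.B (c.α j) (c.α j) := by
    have := c.Bpos v hv
    rw [hBv] at this
    nlinarith
  rw [pr, pr, c.Bsymm (c.α j), div_mul_div_comm, div_lt_iff₀ (by positivity)]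
  nlinarith

lemma int_cartan_pair_cases {a b : ℤ} (ha : a ≤ 0) (hb : b ≤ 0) (hab : a * b < 4)
    (h0 : a = 0 ↔ b = 0) :
    (a = 0 ∧ b = 0) ∨ (a = -1 ∧ b = -1) ∨ (a = -1 ∧ b = -2) ∨ (a = -2 ∧ b = -1) ∨
      (a = -1 ∧ b = -3) ∨ (a = -3 ∧ b = -1) := by
  have ha3 : -3 ≤ a := by
    rcases hb.lt_or_eq with hb | hb
    · nlinarith
    · have := h0.2 hb
      omega
  have hb3 : -3 ≤ b := by
    rcases ha.lt_or_eq with ha | ha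
    · nlinarith
    · have := h0.1 ha
      omega
  interval_cases a <;> interval_cases b <;> simp_all

/-- The rank-two types `A₁ × A₁`, `A₂`, `B₂`, `G₂`. -/
lemma exists_cartan_pair (hij : i ≠ j) :
    ∃ a b : ℤ, pr c.B (c.α j) (c.α i) = a ∧ pr c.B (c.α i) (c.α j) = b ∧
      ((a = 0 ∧ b = 0) ∨ (a = -1 ∧ b = -1) ∨ (a = -1 ∧ b = -2) ∨ (a = -2 ∧ b = -1) ∨
        (a = -1 ∧ b = -3) ∨ (a = -3 ∧ b = -1)) := by
  obtain ⟨a, ha⟩ := c.crystal _ (c.α_mem i) _ (c.α_mem j)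
  obtain ⟨b, hb⟩ := c.crystal _ (c.α_mem j) _ (c.α_mem i)
  refine ⟨a, b, ha, hb, int_cartan_pair_cases ?_ ?_ ?_ ?_⟩
  · exact_mod_cast ha ▸ c.pr_α_α_nonpos hij
  · exact_mod_cast hb ▸ c.pr_α_α_nonpos hij.symm
  · exact_mod_cast ha ▸ hb ▸ c.pr_α_α_mul_pr_α_α_lt_four hij
  · have := c.pr_α_α_eq_zero_iff (i := i) (j := j)
    rw [ha, hb] at this
    exact_mod_cast this

end RootSystemCtx

/-- The matrix of `sᵢ sⱼ` on `span {αᵢ, αⱼ}` in the basis `αᵢ, αⱼ`, where `a = (αⱼ, αᵢ^∨)` and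
`b = (αᵢ, αⱼ^∨)`. -/
def sMulSMatrix (a b : ℤ) : Matrix (Fin 2) (Fin 2) ℤ := !![a * b - 1, a; -b, -1]

open scoped Matrix

namespace RootSystemCtx

variable {E I : Type} [AddCommGroup E] [Module ℚ E] [Fintype I] (c : RootSystemCtx E I)
  {i j : I} {a b : ℤ}

lemma s_mul_s_apply_smul_add_smul (ha : pr c.B (c.α j) (c.α i) = a)
    (hb : pr c.B (c.α i) (c.α j) = b) (x y : ℚ) :
    (c.s i * c.s j) (x • c.α i + y • c.α j) =
      ((a * b - 1) * x + a * y) • c.α i + (-b * x - y) • c.α j := by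
  rw [LinearEquiv.mul_apply, c.s_apply, c.s_apply]
  simp only [pr_add, pr_sub, pr_smul, c.pr_α_self, ha, hb]
  module

lemma s_mul_s_pow_apply_smul_add_smul (ha : pr c.B (c.α j) (c.α i) = a)
    (hb : pr c.B (c.α i) (c.α j) = b) (n : ℕ) (u : Fin 2 → ℚ) :
    ((c.s i * c.s j) ^ n) (u 0 • c.α i + u 1 • c.α j) =
      ((sMulSMatrix a b).map (Int.cast : ℤ → ℚ) ^ n *ᵥ u) 0 • c.α i +
        ((sMulSMatrix a b).map (Int.cast : ℤ → ℚ) ^ n *ᵥ u) 1 • c.α j := by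
  induction n with
  | zero => simp
  | succ n ih =>
    rw [pow_succ', LinearEquiv.mul_apply, ih, c.s_mul_s_apply_smul_add_smul ha hb, pow_succ',
      ← Matrix.mulVec_mulVec]
    simp [Matrix.mulVec, dotProduct, Fin.sum_univ_two, sMulSMatrix]
    module

lemma s_mul_s_apply_of_pr_eq_zero {v : E} (hvi : pr c.B v (c.α i) = 0)
    (hvj : pr c.B v (c.α j) = 0) : (c.s i * c.s j) v = v := by
  rw [LinearEquiv.mul_apply, c.s_apply j, hvj, zero_smul, sub_zero, c.s_apply, hvi, zero_smul,
    sub_zero]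

/-- Since the Cartan matrix `!![2, a; b, 2]` is invertible, `E` is the sum of `span {αᵢ, αⱼ}`
and the subspace fixed by `sᵢ` and `sⱼ`. -/
lemma exists_sub_smul_add_smul_pr_eq_zero (ha : pr c.B (c.α j) (c.α i) = a)
    (hb : pr c.B (c.α i) (c.α j) = b) (hab : a * b ≠ 4) (v : E) :
    ∃ u : Fin 2 → ℚ, pr c.B (v - (u 0 • c.α i + u 1 • c.α j)) (c.α i) = 0 ∧
      pr c.B (v - (u 0 • c.α i + u 1 • c.α j)) (c.α j) = 0 := by
  have hD : (4 - a * b : ℚ) ≠ 0 := by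
    rw [sub_ne_zero]
    exact_mod_cast hab.symm
  refine ⟨![(2 * pr c.B v (c.α i) - a * pr c.B v (c.α j)) / (4 - a * b),
    (2 * pr c.B v (c.α j) - b * pr c.B v (c.α i)) / (4 - a * b)], ?_, ?_⟩ <;>
  · simp only [pr_sub, pr_add, pr_smul, c.pr_α_self, ha, hb, Matrix.cons_val_zero,
      Matrix.cons_val_one]
    field_simp
    ring

lemma s_mul_s_pow_eq_one_iff (hij : i ≠ j) (ha : pr c.B (c.α j) (c.α i) = a)
    (hb : pr c.B (c.α i) (c.α j) = b) (n : ℕ) :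
    (c.s i * c.s j) ^ n = 1 ↔ sMulSMatrix a b ^ n = 1 := by
  set A := (sMulSMatrix a b).map (Int.cast : ℤ → ℚ)
  have hA : sMulSMatrix a b ^ n = 1 ↔ A ^ n = 1 := by
    have hmap : A ^ n = (sMulSMatrix a b ^ n).map Int.cast :=
      (map_pow (Int.castRingHom ℚ).mapMatrix _ n).symm
    rw [hmap]
    exact ((Matrix.map_injective (Int.cast_injective (α := ℚ))).eq_iff'
      (Matrix.map_one _ Int.cast_zero Int.cast_one)).symm
  have hpow := c.s_mul_s_pow_apply_smul_add_smul ha hb n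
  rw [hA]
  constructor
  · intro hg
    refine Matrix.ext_iff_mulVec.2 fun u => ?_
    have hu := hpow u
    rw [hg, LinearEquiv.coe_one, id, ← sub_eq_zero, add_sub_add_comm, ← sub_smul,
      ← sub_smul] at hu
    obtain ⟨h0, h1⟩ := c.eq_zero_of_smul_α_add_smul_α_eq_zero hij hu
    rw [Matrix.one_mulVec]
    ext k
    fin_cases k
    exacts [(sub_eq_zero.1 h0).symm, (sub_eq_zero.1 h1).symm]
  · intro hAn
    refine LinearEquiv.ext fun v => ?_
    have hab : a * b ≠ 4 := by
      have := c.pr_α_α_mul_pr_α_α_lt_four hij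
      rw [ha, hb] at this
      exact_mod_cast this.ne
    obtain ⟨u, hui, huj⟩ := c.exists_sub_smul_add_smul_pr_eq_zero ha hb hab v
    have hfix : ((c.s i * c.s j) ^ n) (v - (u 0 • c.α i + u 1 • c.α j)) =
        v - (u 0 • c.α i + u 1 • c.α j) := by
      rw [LinearEquiv.pow_apply]
      exact Function.iterate_fixed (c.s_mul_s_apply_of_pr_eq_zero hui huj) n
    rw [map_sub, hpow, hAn, Matrix.one_mulVec, sub_eq_iff_eq_add, sub_add_cancel] at hfix
    exact hfix

lemma orderOf_s_mul_s (hij : i ≠ j) (ha : pr c.B (c.α j) (c.α i) = a)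
    (hb : pr c.B (c.α i) (c.α j) = b) :
    orderOf (c.s i * c.s j) = orderOf (sMulSMatrix a b) :=
  orderOf_eq_orderOf_iff.2 (c.s_mul_s_pow_eq_one_iff hij ha hb)

end RootSystemCtx

section AlternatingProd

variable {G : Type*} [Monoid G]

def alternatingProd (A B : G) (m : ℕ) : G :=
  (List.ofFn fun k : Fin m => if (k : ℕ) % 2 = 0 then A else B).prod

lemma alternatingProd_zero (A B : G) : alternatingProd A B 0 = 1 := rfl

lemma alternatingProd_succ (A B : G) (m : ℕ) :
    alternatingProd A B (m + 1) = A * alternatingProd B A m := by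
  simp only [alternatingProd, List.ofFn_succ, List.prod_cons, Fin.val_zero, Nat.zero_mod,
    if_true, Fin.val_succ]
  congr 2
  exact congrArg List.ofFn (funext fun k => by split_ifs <;> first | rfl | omega)

end AlternatingProd

namespace PsiData

variable {E I : Type} [AddCommGroup E] [Module ℚ E] [Fintype I] {c : RootSystemCtx E I}
  (P : PsiData c) {M : Type} [AddCommGroup M] [Module ℂ M]

lemma smul_basis_congr (z : Module.Basis P.Ψ ℂ M) {c₁ c₂ : ℂ} {v₁ v₂ : E} {h₁ : v₁ ∈ P.Ψ}
    {h₂ : v₂ ∈ P.Ψ} (hc : c₁ = c₂) (hv : v₁ = v₂) : c₁ • z ⟨v₁, h₁⟩ = c₂ • z ⟨v₂, h₂⟩ := by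
  subst hc hv
  rfl

/-- `n k` maps `z μ` to `± z (sₖ μ)`; as `p = (μ, αₖ^∨)` lies in `{0, 1, -1}`, the sign
`1 - p - p²` is `-1` exactly when `p = 1`. -/
def ActsBySignedReflections (z : Module.Basis P.Ψ ℂ M) (n : I → Module.End ℂ M) : Prop :=
  ∀ (k : I) (μ : P.Ψ), n k (z μ) =
    ((1 - pr c.B μ (c.α k) - pr c.B μ (c.α k) * pr c.B μ (c.α k) : ℚ) : ℂ) •
      z ⟨μ - pr c.B μ (c.α k) • c.α k, P.sub_pr_smul_mem μ.2 k⟩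

variable {P} {z : Module.Basis P.Ψ ℂ M} {n : I → Module.End ℂ M} {i j : I}

lemma ActsBySignedReflections.braid_A₁A₁ (hn : P.ActsBySignedReflections z n)
    (ha : pr c.B (c.α j) (c.α i) = 0) (hb : pr c.B (c.α i) (c.α j) = 0) :
    alternatingProd (n i) (n j) 2 = alternatingProd (n j) (n i) 2 := by
  unfold ActsBySignedReflections at hn
  refine z.ext fun μ => ?_
  simp only [alternatingProd_succ, alternatingProd_zero, mul_one, Module.End.mul_apply]
  rcases P.pr_mem_of_mem_Φ μ.2 (c.α_mem i) with hp | hp | hp <;>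
    rcases P.pr_mem_of_mem_Φ μ.2 (c.α_mem j) with hq | hq | hq <;>
  · simp only [hn, map_smul, smul_smul, pr_sub, pr_smul, hp, hq, ha, hb]
    exact P.smul_basis_congr z (by push_cast; ring_nf) (by module)

lemma ActsBySignedReflections.braid_A₂ (hn : P.ActsBySignedReflections z n)
    (ha : pr c.B (c.α j) (c.α i) = -1) (hb : pr c.B (c.α i) (c.α j) = -1) :
    alternatingProd (n i) (n j) 3 = alternatingProd (n j) (n i) 3 := by
  have hii := c.pr_α_self i
  have hjj := c.pr_α_self j
  unfold ActsBySignedReflections at hn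
  refine z.ext fun μ => ?_
  have hmid := P.pr_mem_of_mem_Φ (P.sub_pr_smul_mem μ.2 j) (c.α_mem i)
  simp only [alternatingProd_succ, alternatingProd_zero, mul_one, Module.End.mul_apply]
  rcases P.pr_mem_of_mem_Φ μ.2 (c.α_mem i) with hp | hp | hp <;>
    rcases P.pr_mem_of_mem_Φ μ.2 (c.α_mem j) with hq | hq | hq <;>
    norm_num [pr_sub, pr_smul, hp, hq, ha] at hmid <;>
  · simp only [hn, map_smul, smul_smul, pr_sub, pr_smul, hp, hq, ha, hb, hii, hjj]
    exact P.smul_basis_congr z (by push_cast; ring_nf) (by module)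

lemma ActsBySignedReflections.braid_B₂ (hn : P.ActsBySignedReflections z n)
    (ha : pr c.B (c.α j) (c.α i) = -1) (hb : pr c.B (c.α i) (c.α j) = -2) :
    alternatingProd (n i) (n j) 4 = alternatingProd (n j) (n i) 4 := by
  have hii := c.pr_α_self i
  have hjj := c.pr_α_self j
  unfold ActsBySignedReflections at hn
  refine z.ext fun μ => ?_
  have hmid := P.pr_mem_of_mem_Φ (P.sub_pr_smul_mem μ.2 i) (c.α_mem j)
  simp only [alternatingProd_succ, alternatingProd_zero, mul_one, Module.End.mul_apply]
  rcases P.pr_mem_of_mem_Φ μ.2 (c.α_mem i) with hp | hp | hp <;>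
    rcases P.pr_mem_of_mem_Φ μ.2 (c.α_mem j) with hq | hq | hq <;>
    norm_num [pr_sub, pr_smul, hp, hq, hb] at hmid <;>
  · simp only [hn, map_smul, smul_smul, pr_sub, pr_smul, hp, hq, ha, hb, hii, hjj]
    exact P.smul_basis_congr z (by push_cast; ring_nf) (by module)

lemma ActsBySignedReflections.braid_G₂ (hn : P.ActsBySignedReflections z n)
    (ha : pr c.B (c.α j) (c.α i) = -1) (hb : pr c.B (c.α i) (c.α j) = -3) :
    alternatingProd (n i) (n j) 6 = alternatingProd (n j) (n i) 6 := by
  have hii := c.pr_α_self i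
  have hjj := c.pr_α_self j
  unfold ActsBySignedReflections at hn
  refine z.ext fun μ => ?_
  have hmid := And.intro (P.pr_mem_of_mem_Φ (P.sub_pr_smul_mem μ.2 i) (c.α_mem j))
    (P.pr_mem_of_mem_Φ (P.sub_pr_smul_mem (P.sub_pr_smul_mem μ.2 j) i) (c.α_mem j))
  simp only [alternatingProd_succ, alternatingProd_zero, mul_one, Module.End.mul_apply]
  rcases P.pr_mem_of_mem_Φ μ.2 (c.α_mem i) with hp | hp | hp <;>
    rcases P.pr_mem_of_mem_Φ μ.2 (c.α_mem j) with hq | hq | hq <;>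
    norm_num [pr_sub, pr_smul, hp, hq, ha, hb, hjj] at hmid <;>
  · simp only [hn, map_smul, smul_smul, pr_sub, pr_smul, hp, hq, ha, hb, hii, hjj]
    exact P.smul_basis_congr z (by push_cast; ring_nf) (by module)

variable (P) in
lemma nOp_actsBySignedReflections (z : Module.Basis P.Ψ ℂ M) (e f : I → Module.End ℂ M)
    (he1 : ∀ (i : I) (μ : P.Ψ) (hm : (μ : E) + c.α i ∈ P.Ψ),
      pr c.B (μ : E) (c.α i) = -1 → e i (z μ) = z ⟨(μ : E) + c.α i, hm⟩)
    (he0 : ∀ (i : I) (μ : P.Ψ), pr c.B (μ : E) (c.α i) ≠ -1 → e i (z μ) = 0)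
    (hf1 : ∀ (i : I) (μ : P.Ψ) (hm : (μ : E) - c.α i ∈ P.Ψ),
      pr c.B (μ : E) (c.α i) = 1 → f i (z μ) = z ⟨(μ : E) - c.α i, hm⟩)
    (hf0 : ∀ (i : I) (μ : P.Ψ), pr c.B (μ : E) (c.α i) ≠ 1 → f i (z μ) = 0) :
    P.ActsBySignedReflections z fun k => nOp e f k 1 1 := by
  intro k μ
  have hkk := c.pr_α_self k
  have hsμ := P.sub_pr_smul_mem μ.2 k
  simp only [nOp, one_smul, Module.End.mul_apply, LinearMap.add_apply, LinearMap.sub_apply,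
    Module.End.one_apply, map_add, map_sub]
  rcases P.pr_mem_of_mem_Φ μ.2 (c.α_mem k) with hp | hp | hp
  · rw [he0 k μ (by norm_num [hp]), hf0 k μ (by norm_num [hp]),
      P.smul_basis_congr z (c₂ := 1) (h₂ := μ.2) (by norm_num [hp]) (by simp [hp]), one_smul]
    simp only [map_zero, add_zero, sub_zero]
  · have hm : (μ : E) - c.α k ∈ P.Ψ := by simpa [hp] using hsμ
    have hef : e k (z ⟨μ - c.α k, hm⟩) = z μ := by
      rw [he1 k _ (by simp) (by rw [pr_sub, hp, hkk]; norm_num)]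
      exact congrArg z (Subtype.ext (sub_add_cancel _ _))
    rw [he0 k μ (by norm_num [hp]), hf1 k μ hm hp, hef,
      P.smul_basis_congr z (c₂ := -1) (h₂ := hm) (by norm_num [hp]) (by simp [hp]), neg_one_smul]
    simp only [map_zero]
    abel
  · have hm : (μ : E) + c.α k ∈ P.Ψ := by simpa [hp] using hsμ
    have hpr : pr c.B ((μ : E) + c.α k) (c.α k) = 1 := by rw [pr_add, hp, hkk]; norm_num
    have hfe : f k (z ⟨μ + c.α k, hm⟩) = z μ := by
      rw [hf1 k _ (by simp) hpr]
      exact congrArg z (Subtype.ext (add_sub_cancel_right _ _))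
    rw [he1 k μ hm hp, hf0 k μ (by norm_num [hp]), hfe, he1 k μ hm hp,
      he0 k _ (by norm_num [hpr]),
      P.smul_basis_congr z (c₂ := 1) (h₂ := hm) (by norm_num [hp]) (by simp [hp]), one_smul]
    simp only [map_zero]
    abel

end PsiData

/-- Proposition 3.2: the elements nᵢ satisfy the braid relations. -/
theorem stmt_8 {E I : Type} [AddCommGroup E] [Module ℚ E] [Fintype I]
    (c : RootSystemCtx E I) (P : PsiData c)
    (M : Type) [AddCommGroup M] [Module ℂ M] (z : Module.Basis P.Ψ ℂ M)
    (e f : I → Module.End ℂ M)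
    (he1 : ∀ (i : I) (μ : P.Ψ) (hm : (μ : E) + c.α i ∈ P.Ψ),
      pr c.B (μ : E) (c.α i) = -1 → e i (z μ) = z ⟨(μ : E) + c.α i, hm⟩)
    (he0 : ∀ (i : I) (μ : P.Ψ), pr c.B (μ : E) (c.α i) ≠ -1 → e i (z μ) = 0)
    (hf1 : ∀ (i : I) (μ : P.Ψ) (hm : (μ : E) - c.α i ∈ P.Ψ),
      pr c.B (μ : E) (c.α i) = 1 → f i (z μ) = z ⟨(μ : E) - c.α i, hm⟩)
    (hf0 : ∀ (i : I) (μ : P.Ψ), pr c.B (μ : E) (c.α i) ≠ 1 → f i (z μ) = 0)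
    (i j : I) (hij : i ≠ j) :
    2 ≤ orderOf (c.s i * c.s j) ∧
    (List.ofFn fun k : Fin (orderOf (c.s i * c.s j)) =>
      if (k : ℕ) % 2 = 0 then nOp e f i 1 1 else nOp e f j 1 1).prod =
    (List.ofFn fun k : Fin (orderOf (c.s i * c.s j)) =>
      if (k : ℕ) % 2 = 0 then nOp e f j 1 1 else nOp e f i 1 1).prod := by
  have hn := P.nOp_actsBySignedReflections z e f he1 he0 hf1 hf0
  show 2 ≤ orderOf (c.s i * c.s j) ∧ alternatingProd (nOp e f i 1 1) (nOp e f j 1 1) _ =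
    alternatingProd (nOp e f j 1 1) (nOp e f i 1 1) _
  obtain ⟨a, b, ha, hb, hab⟩ := c.exists_cartan_pair hij
  rw [c.orderOf_s_mul_s hij ha hb]
  rcases hab with ⟨rfl, rfl⟩ | ⟨rfl, rfl⟩ | ⟨rfl, rfl⟩ | ⟨rfl, rfl⟩ | ⟨rfl, rfl⟩ | ⟨rfl, rfl⟩
  · rw [show orderOf (sMulSMatrix 0 0) = 2 by rw [orderOf_eq_iff two_pos]; decide]
    exact ⟨le_rfl, hn.braid_A₁A₁ (by exact_mod_cast ha) (by exact_mod_cast hb)⟩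
  · rw [show orderOf (sMulSMatrix (-1) (-1)) = 3 by rw [orderOf_eq_iff three_pos]; decide]
    exact ⟨by norm_num, hn.braid_A₂ (by exact_mod_cast ha) (by exact_mod_cast hb)⟩
  · rw [show orderOf (sMulSMatrix (-1) (-2)) = 4 by rw [orderOf_eq_iff four_pos]; decide]
    exact ⟨by norm_num, hn.braid_B₂ (by exact_mod_cast ha) (by exact_mod_cast hb)⟩
  · rw [show orderOf (sMulSMatrix (-2) (-1)) = 4 by rw [orderOf_eq_iff four_pos]; decide]
    exact ⟨by norm_num, (hn.braid_B₂ (by exact_mod_cast hb) (by exact_mod_cast ha)).symm⟩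
  · rw [show orderOf (sMulSMatrix (-1) (-3)) = 6 by rw [orderOf_eq_iff (by norm_num)]; decide]
    exact ⟨by norm_num, hn.braid_G₂ (by exact_mod_cast ha) (by exact_mod_cast hb)⟩
  · rw [show orderOf (sMulSMatrix (-3) (-1)) = 6 by rw [orderOf_eq_iff (by norm_num)]; decide]
    exact ⟨by norm_num, (hn.braid_G₂ (by exact_mod_cast hb) (by exact_mod_cast ha)).symm⟩
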